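/- arXiv:2305.07388 — 4 statements merged into one kernel-verified Lean document; each statement's English description precedes it below -/
import Mathlib

section
/- Let H be a complex Hilbert space, A a unital C*-algebra, and (a†, a) a CAR family over H in A. Let κ be an antiunitary involution on H and U a bounded linear operator on H that is κ-antisymmetric, i.e. κ(U*(κf)) = −U f for all f. Define Ψ(f) := a(κ(U f)) + a†(f). Then the fields anticommute: Ψ(f)·Ψ(g) + Ψ(g)·Ψ(f) = 0 for all f, g ∈ H. -/
/-!
By the CAR, the anticommutator of `Ψ f` and `Ψ g` is `(⟪κ (U f), g⟫ + ⟪κ (U g), f⟫) • 1`.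
Since `κ` makes `(x, y) ↦ ⟪κ x, y⟫` a symmetric bilinear form, `κ`-antisymmetry of `U` makes
`(f, g) ↦ ⟪κ (U f), g⟫` antisymmetric, so this scalar vanishes.
-/

open ContinuousLinearMap

section CAR

variable {𝕜 H A : Type*} [Semiring 𝕜] [Inner 𝕜 H] [Ring A] [Star A] [Module 𝕜 A]

theorem car_field_anticomm (ad : H → A)
    (hCAR1 : ∀ f g : H, star (ad f) * ad g + ad g * star (ad f) = (inner 𝕜 f g : 𝕜) • (1 : A))
    (hCAR2 : ∀ f g : H, ad f * ad g + ad g * ad f = 0)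
    (hCAR3 : ∀ f g : H, star (ad f) * star (ad g) + star (ad g) * star (ad f) = 0)
    (h₁ f h₂ g : H) :
    (star (ad h₁) + ad f) * (star (ad h₂) + ad g) + (star (ad h₂) + ad g) * (star (ad h₁) + ad f)
      = (inner 𝕜 h₁ g + inner 𝕜 h₂ f) • (1 : A) := by
  have expand :
      (star (ad h₁) + ad f) * (star (ad h₂) + ad g) + (star (ad h₂) + ad g) * (star (ad h₁) + ad f)
        = (star (ad h₁) * star (ad h₂) + star (ad h₂) * star (ad h₁))
          + (star (ad h₁) * ad g + ad g * star (ad h₁))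
          + (star (ad h₂) * ad f + ad f * star (ad h₂))
          + (ad f * ad g + ad g * ad f) := by
    noncomm_ring
  rw [expand, hCAR3, hCAR1, hCAR1, hCAR2, zero_add, add_zero, add_smul]

end CAR

section Antiunitary

variable {𝕜 H : Type*} [RCLike 𝕜] [NormedAddCommGroup H] [InnerProductSpace 𝕜 H]

theorem inner_apply_left_comm {κ : H → H} (hκinv : Function.Involutive κ)
    (hκinner : ∀ x y : H, inner 𝕜 (κ x) (κ y) = inner 𝕜 y x) (x y : H) :
    inner 𝕜 (κ x) y = inner 𝕜 (κ y) x := by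
  rw [← hκinner y, hκinv]

theorem inner_apply_map_antisymm [CompleteSpace H] {κ : H → H} (hκinv : Function.Involutive κ)
    (hκinner : ∀ x y : H, inner 𝕜 (κ x) (κ y) = inner 𝕜 y x) {U : H →L[𝕜] H}
    (hanti : ∀ f : H, κ (adjoint U (κ f)) = -(U f)) (f g : H) :
    inner 𝕜 (κ (U f)) g + inner 𝕜 (κ (U g)) f = 0 := by
  have hadj : adjoint U (κ g) = κ (-(U g)) := by rw [← hanti, hκinv]
  have : inner 𝕜 (κ (U f)) g = -inner 𝕜 (κ (U g)) f :=
    calc inner 𝕜 (κ (U f)) g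
        = inner 𝕜 (κ g) (U f) := inner_apply_left_comm hκinv hκinner _ _
      _ = inner 𝕜 (κ (-(U g))) f := by rw [← adjoint_inner_left, hadj]
      _ = -inner 𝕜 (κ f) (U g) := by
          rw [inner_apply_left_comm hκinv hκinner, inner_neg_right]
      _ = -inner 𝕜 (κ (U g)) f := by rw [inner_apply_left_comm hκinv hκinner]
  rw [this, neg_add_cancel]

end Antiunitary

theorem fermionic_fields_anticommute_general
    {H A : Type*}
    [NormedAddCommGroup H] [InnerProductSpace ℂ H] [CompleteSpace H]
    [NormedRing A] [StarRing A] [NormedAlgebra ℂ A]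
    -- the CAR family: creation operators `ad`, annihilation operators `star ∘ ad`
    (ad : H →ₗ[ℂ] A)
    (hCAR1 : ∀ f g : H,
      star (ad f) * ad g + ad g * star (ad f) = (inner ℂ f g : ℂ) • (1 : A))
    (hCAR2 : ∀ f g : H, ad f * ad g + ad g * ad f = 0)
    (hCAR3 : ∀ f g : H,
      star (ad f) * star (ad g) + star (ad g) * star (ad f) = 0)
    -- the antiunitary involution `κ`
    (κ : H → H)
    (hκinv : ∀ x : H, κ (κ x) = x)
    (hκinner : ∀ x y : H, (inner ℂ (κ x) (κ y) : ℂ) = (inner ℂ y x : ℂ))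
    -- the `κ`-antisymmetric operator `U`
    (U : H →L[ℂ] H)
    (hanti : ∀ f : H, κ (ContinuousLinearMap.adjoint U (κ f)) = -(U f))
    (f g : H) :
    (star (ad (κ (U f))) + ad f) * (star (ad (κ (U g))) + ad g) +
      (star (ad (κ (U g))) + ad g) * (star (ad (κ (U f))) + ad f) = 0 := by
  rw [car_field_anticomm ad hCAR1 hCAR2 hCAR3, inner_apply_map_antisymm hκinv hκinner hanti,
    zero_smul]

/-- Let `H` be a complex Hilbert space, `A` a unital C*-algebra, and
`(a†, a)` a CAR family over `H` in `A` (with `a f = star (a† f)`).  Let `κ` be an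
antiunitary involution on `H` and `U` a bounded linear operator on `H` that is
`κ`-antisymmetric, i.e. `κ (U* (κ f)) = −U f`.  Define `Ψ f := a (κ (U f)) + a† f`.
Then the fields anticommute: `Ψ f · Ψ g + Ψ g · Ψ f = 0` for all `f, g ∈ H`. -/
theorem fermionic_fields_anticommute
    {H A : Type*}
    [NormedAddCommGroup H] [InnerProductSpace ℂ H] [CompleteSpace H]
    [NormedRing A] [StarRing A] [CStarRing A] [NormedAlgebra ℂ A]
    [StarModule ℂ A] [CompleteSpace A]
    -- the CAR family: creation operators `ad`, annihilation operators `star ∘ ad`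
    (ad : H →ₗ[ℂ] A)
    (hCAR1 : ∀ f g : H,
      star (ad f) * ad g + ad g * star (ad f) = (inner ℂ f g : ℂ) • (1 : A))
    (hCAR2 : ∀ f g : H, ad f * ad g + ad g * ad f = 0)
    (hCAR3 : ∀ f g : H,
      star (ad f) * star (ad g) + star (ad g) * star (ad f) = 0)
    -- the antiunitary involution `κ`
    (κ : H → H)
    (hκadd : ∀ x y : H, κ (x + y) = κ x + κ y)
    (hκsmul : ∀ (c : ℂ) (x : H), κ (c • x) = (starRingEnd ℂ c) • κ x)
    (hκinv : ∀ x : H, κ (κ x) = x)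
    (hκinner : ∀ x y : H, (inner ℂ (κ x) (κ y) : ℂ) = (inner ℂ y x : ℂ))
    -- the `κ`-antisymmetric operator `U`
    (U : H →L[ℂ] H)
    (hanti : ∀ f : H, κ (ContinuousLinearMap.adjoint U (κ f)) = -(U f))
    (f g : H) :
    (star (ad (κ (U f))) + ad f) * (star (ad (κ (U g))) + ad g) +
      (star (ad (κ (U g))) + ad g) * (star (ad (κ (U f))) + ad f) = 0 :=
  fermionic_fields_anticommute_general ad hCAR1 hCAR2 hCAR3 κ hκinv hκinner U hanti f g
end

section
/- Let H be a complex Hilbert space and let K := H ⊕ H be the Hilbert-space direct sum (with inner product ⟪(x₁,x₂),(y₁,y₂)⟫ = ⟪x₁,y₁⟫ + ⟪x₂,y₂⟫). Let A be a unital C*-algebra and (a†₂, a₂) a CAR family over K in A. Let κ be an antiunitary involution on H and let R, S be bounded selfadjoint operators on H with R∘R + S∘S = 1. Define, for f ∈ H, π†(f) := a†₂(R f, 0) + a₂(0, κ(S f)) and π(f) := a†₂(0, κ(S f)) + a₂(R f, 0). Then (π†, π) again satisfy the canonical anticommutation relations over H: π(f)π†(g) + π†(g)π(f) = ⟪f,g⟫·1,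 π†(f)π†(g) + π†(g)π†(f) = 0, and π(f)π(g) + π(g)π(f) = 0 for all f,g ∈ H. -/
/-- The canonical inclusion of a pair `(x, y) ∈ H × H` into the Hilbert-space direct sum
`H ⊕ H = WithLp 2 (H × H)`. -/
noncomputable def dirSum {H : Type*} [NormedAddCommGroup H] [InnerProductSpace ℂ H]
    (x y : H) : WithLp 2 (H × H) :=
  (WithLp.equiv 2 (H × H)).symm (x, y)

/-!
Write `π† f = a†(u f) + a(v f)` with `u f = (R f, 0)` and `v f = (0, κ (S f))`. Expanding an
anticommutator of such sums gives four anticommutators of the original CAR family. The mixed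
ones between `u`- and `v`-terms vanish because `u` and `v` take values in orthogonal summands,
and the remaining ones contribute `⟪R f, R g⟫ + ⟪κ (S g), κ (S f)⟫ = ⟪R f, R g⟫ + ⟪S f, S g⟫`,
which is `⟪f, g⟫` because `R² + S² = 1`.
-/

theorem add_mul_add_add_add_mul_add {A : Type*} [Ring A] (a b c d : A) :
    (a + b) * (c + d) + (c + d) * (a + b) =
      (a * c + c * a) + (a * d + d * a) + (b * c + c * b) + (b * d + d * b) := by
  noncomm_ring

@[simp]
theorem inner_dirSum {H : Type*} [NormedAddCommGroup H] [InnerProductSpace ℂ H]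
    (x₁ x₂ y₁ y₂ : H) :
    inner ℂ (dirSum x₁ x₂) (dirSum y₁ y₂) = inner ℂ x₁ y₁ + inner ℂ x₂ y₂ :=
  rfl

theorem inner_add_inner_eq_inner_of_star_mul_add_star_mul_eq_one {𝕜 H : Type*} [RCLike 𝕜]
    [NormedAddCommGroup H] [InnerProductSpace 𝕜 H] [CompleteSpace H] {R S : H →L[𝕜] H}
    (hRS : star R * R + star S * S = 1) (f g : H) :
    inner 𝕜 (R f) (R g) + inner 𝕜 (S f) (S g) = inner 𝕜 f g := by
  simp only [ContinuousLinearMap.star_eq_adjoint] at hRS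
  rw [← ContinuousLinearMap.adjoint_inner_right R, ← ContinuousLinearMap.adjoint_inner_right S,
    ← inner_add_right]
  congr 1
  simpa using congr($hRS g)

section CAR

variable {𝕜 K A ι : Type*} [RCLike 𝕜] [NormedAddCommGroup K] [InnerProductSpace 𝕜 K]
  [Ring A] [StarRing A] [Algebra 𝕜 A] {a : K → A}

theorem anticomm_annihilation_add_creation_creation_add_annihilation
    (hCAR1 : ∀ x y, star (a x) * a y + a y * star (a x) = inner 𝕜 x y • (1 : A))
    (hCAR2 : ∀ x y, a x * a y + a y * a x = 0)
    (hCAR3 : ∀ x y, star (a x) * star (a y) + star (a y) * star (a x) = 0)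
    (u v : ι → K) (i j : ι) :
    (a (v i) + star (a (u i))) * (a (u j) + star (a (v j))) +
        (a (u j) + star (a (v j))) * (a (v i) + star (a (u i))) =
      (inner 𝕜 (u i) (u j) + inner 𝕜 (v j) (v i)) • (1 : A) := by
  rw [add_mul_add_add_add_mul_add, hCAR2, add_comm (a (v i) * _), hCAR1, hCAR3, hCAR1, add_smul]
  abel

theorem anticomm_creation_add_annihilation_of_inner_eq_zero
    (hCAR1 : ∀ x y, star (a x) * a y + a y * star (a x) = inner 𝕜 x y • (1 : A))
    (hCAR2 : ∀ x y, a x * a y + a y * a x = 0)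
    (hCAR3 : ∀ x y, star (a x) * star (a y) + star (a y) * star (a x) = 0)
    {u v : ι → K} (hvu : ∀ i j, inner 𝕜 (v i) (u j) = 0) (i j : ι) :
    (a (u i) + star (a (v i))) * (a (u j) + star (a (v j))) +
        (a (u j) + star (a (v j))) * (a (u i) + star (a (v i))) = 0 := by
  rw [add_mul_add_add_add_mul_add, hCAR2, hCAR3, add_comm (a (u i) * _), hCAR1, hCAR1, hvu,
    hvu]
  simp

theorem anticomm_annihilation_add_creation_of_inner_eq_zero
    (hCAR1 : ∀ x y, star (a x) * a y + a y * star (a x) = inner 𝕜 x y • (1 : A))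
    (hCAR2 : ∀ x y, a x * a y + a y * a x = 0)
    (hCAR3 : ∀ x y, star (a x) * star (a y) + star (a y) * star (a x) = 0)
    {u v : ι → K} (hvu : ∀ i j, inner 𝕜 (v i) (u j) = 0) (i j : ι) :
    (a (v i) + star (a (u i))) * (a (v j) + star (a (u j))) +
        (a (v j) + star (a (u j))) * (a (v i) + star (a (u i))) = 0 := by
  have h := congr(star $(anticomm_creation_add_annihilation_of_inner_eq_zero
    hCAR1 hCAR2 hCAR3 hvu j i))
  have hstar : ∀ k, star (a (u k) + star (a (v k))) = a (v k) + star (a (u k)) := fun k ↦ by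
    rw [star_add, star_star, add_comm]
  rwa [star_add, star_mul, star_mul, hstar, hstar, star_zero] at h

end CAR

theorem arakiWyss_is_CAR_family_general
    {H A : Type*}
    [NormedAddCommGroup H] [InnerProductSpace ℂ H] [CompleteSpace H]
    [NormedRing A] [StarRing A] [NormedAlgebra ℂ A]
    -- the CAR family over `K = H ⊕ H`
    (ad2 : WithLp 2 (H × H) →ₗ[ℂ] A)
    (hCAR1 : ∀ x y : WithLp 2 (H × H),
      star (ad2 x) * ad2 y + ad2 y * star (ad2 x) = (inner ℂ x y : ℂ) • (1 : A))
    (hCAR2 : ∀ x y : WithLp 2 (H × H), ad2 x * ad2 y + ad2 y * ad2 x = 0)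
    (hCAR3 : ∀ x y : WithLp 2 (H × H),
      star (ad2 x) * star (ad2 y) + star (ad2 y) * star (ad2 x) = 0)
    -- the antiunitary involution `κ`
    (κ : H → H)
    (hκinner : ∀ x y : H, (inner ℂ (κ x) (κ y) : ℂ) = (inner ℂ y x : ℂ))
    -- the selfadjoint operators `R`, `S` with `R∘R + S∘S = 1`
    (R S : H →L[ℂ] H) (hR : IsSelfAdjoint R) (hS : IsSelfAdjoint S)
    (hRS : R ∘L R + S ∘L S = 1) :
    (∀ f g : H,
        (ad2 (dirSum 0 (κ (S f))) + star (ad2 (dirSum (R f) 0))) *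
            (ad2 (dirSum (R g) 0) + star (ad2 (dirSum 0 (κ (S g))))) +
          (ad2 (dirSum (R g) 0) + star (ad2 (dirSum 0 (κ (S g))))) *
            (ad2 (dirSum 0 (κ (S f))) + star (ad2 (dirSum (R f) 0))) =
          (inner ℂ f g : ℂ) • (1 : A)) ∧
    (∀ f g : H,
        (ad2 (dirSum (R f) 0) + star (ad2 (dirSum 0 (κ (S f))))) *
            (ad2 (dirSum (R g) 0) + star (ad2 (dirSum 0 (κ (S g))))) +
          (ad2 (dirSum (R g) 0) + star (ad2 (dirSum 0 (κ (S g))))) *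
            (ad2 (dirSum (R f) 0) + star (ad2 (dirSum 0 (κ (S f))))) = 0) ∧
    (∀ f g : H,
        (ad2 (dirSum 0 (κ (S f))) + star (ad2 (dirSum (R f) 0))) *
            (ad2 (dirSum 0 (κ (S g))) + star (ad2 (dirSum (R g) 0))) +
          (ad2 (dirSum 0 (κ (S g))) + star (ad2 (dirSum (R g) 0))) *
            (ad2 (dirSum 0 (κ (S f))) + star (ad2 (dirSum (R f) 0))) = 0) := by
  set u : H → WithLp 2 (H × H) := fun f ↦ dirSum (R f) 0
  set v : H → WithLp 2 (H × H) := fun f ↦ dirSum 0 (κ (S f))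
  have hvu : ∀ f g, inner ℂ (v f) (u g) = 0 := by
    simp only [u, v, inner_dirSum, inner_zero_left, inner_zero_right, add_zero, implies_true]
  have hRS' : star R * R + star S * S = 1 := by rwa [hR.star_eq, hS.star_eq]
  refine ⟨fun f g ↦ ?_,
    anticomm_creation_add_annihilation_of_inner_eq_zero hCAR1 hCAR2 hCAR3 hvu,
    anticomm_annihilation_add_creation_of_inner_eq_zero hCAR1 hCAR2 hCAR3 hvu⟩
  rw [anticomm_annihilation_add_creation_creation_add_annihilation hCAR1 hCAR2 hCAR3 u v]
  simp only [u, v, inner_dirSum, inner_zero_left, add_zero, zero_add, hκinner,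
    inner_add_inner_eq_inner_of_star_mul_add_star_mul_eq_one hRS']

/-- Let `K := H ⊕ H` be the Hilbert-space direct sum, `A` a unital
C*-algebra, and `(a†₂, a₂)` a CAR family over `K` in `A`.  Let `κ` be an antiunitary
involution on `H` and `R, S` bounded selfadjoint operators on `H` with `R² + S² = 1`.
Define `π† f := a†₂ (R f, 0) + a₂ (0, κ (S f))` and `π f := a†₂ (0, κ (S f)) + a₂ (R f, 0)`.
Then `(π†, π)` again satisfy the canonical anticommutation relations over `H`. -/
theorem arakiWyss_is_CAR_family
    {H A : Type*}
    [NormedAddCommGroup H] [InnerProductSpace ℂ H] [CompleteSpace H]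
    [NormedRing A] [StarRing A] [CStarRing A] [NormedAlgebra ℂ A]
    [StarModule ℂ A] [CompleteSpace A]
    -- the CAR family over `K = H ⊕ H`
    (ad2 : WithLp 2 (H × H) →ₗ[ℂ] A)
    (hCAR1 : ∀ x y : WithLp 2 (H × H),
      star (ad2 x) * ad2 y + ad2 y * star (ad2 x) = (inner ℂ x y : ℂ) • (1 : A))
    (hCAR2 : ∀ x y : WithLp 2 (H × H), ad2 x * ad2 y + ad2 y * ad2 x = 0)
    (hCAR3 : ∀ x y : WithLp 2 (H × H),
      star (ad2 x) * star (ad2 y) + star (ad2 y) * star (ad2 x) = 0)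
    -- the antiunitary involution `κ`
    (κ : H → H)
    (hκadd : ∀ x y : H, κ (x + y) = κ x + κ y)
    (hκsmul : ∀ (c : ℂ) (x : H), κ (c • x) = (starRingEnd ℂ c) • κ x)
    (hκinv : ∀ x : H, κ (κ x) = x)
    (hκinner : ∀ x y : H, (inner ℂ (κ x) (κ y) : ℂ) = (inner ℂ y x : ℂ))
    -- the selfadjoint operators `R`, `S` with `R∘R + S∘S = 1`
    (R S : H →L[ℂ] H) (hR : IsSelfAdjoint R) (hS : IsSelfAdjoint S)
    (hRS : R ∘L R + S ∘L S = 1) :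
    (∀ f g : H,
        (ad2 (dirSum 0 (κ (S f))) + star (ad2 (dirSum (R f) 0))) *
            (ad2 (dirSum (R g) 0) + star (ad2 (dirSum 0 (κ (S g))))) +
          (ad2 (dirSum (R g) 0) + star (ad2 (dirSum 0 (κ (S g))))) *
            (ad2 (dirSum 0 (κ (S f))) + star (ad2 (dirSum (R f) 0))) =
          (inner ℂ f g : ℂ) • (1 : A)) ∧
    (∀ f g : H,
        (ad2 (dirSum (R f) 0) + star (ad2 (dirSum 0 (κ (S f))))) *
            (ad2 (dirSum (R g) 0) + star (ad2 (dirSum 0 (κ (S g))))) +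
          (ad2 (dirSum (R g) 0) + star (ad2 (dirSum 0 (κ (S g))))) *
            (ad2 (dirSum (R f) 0) + star (ad2 (dirSum 0 (κ (S f))))) = 0) ∧
    (∀ f g : H,
        (ad2 (dirSum 0 (κ (S f))) + star (ad2 (dirSum (R f) 0))) *
            (ad2 (dirSum 0 (κ (S g))) + star (ad2 (dirSum (R g) 0))) +
          (ad2 (dirSum 0 (κ (S g))) + star (ad2 (dirSum (R g) 0))) *
            (ad2 (dirSum 0 (κ (S f))) + star (ad2 (dirSum (R f) 0))) = 0) :=
  arakiWyss_is_CAR_family_general ad2 hCAR1 hCAR2 hCAR3 κ hκinner R S hR hS hRS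
end

section
/- Let H be a complex Hilbert space, κ an antiunitary involution on H, and U a unitary operator on H that is κ-antisymmetric, i.e. κ(U*(κf)) = −U f for all f. Let ρ be a bounded selfadjoint operator on H commuting with κ∘U (i.e. ρ(κ(U x)) = κ(U(ρ x)) for all x), and suppose 1 − 2ρ is invertible with bounded inverse T (so T∘(1−2ρ) = (1−2ρ)∘T = 1). Then Ũ := U∘T is again κ-antisymmetric: κ(Ũ*(κf)) = −Ũ f for all f ∈ H. -/
/-!
Since `1 - 2ρ` is selfadjoint and commutes with the additive map `κ ∘ U`, so does its inverse
`T`. For such a `T`, `(U T)* = T U*`, and `U* κ = -κ U` (antisymmetry of `U` and `κ² = 1`)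
lets `T` be moved past `κ U`, giving `κ (U T)* κ = -κ κ U T = -U T`.
-/

open ContinuousLinearMap Function

theorem IsSelfAdjoint.of_mul_eq_one {R : Type*} [Monoid R] [StarMul R] {a b : R}
    (ha : IsSelfAdjoint a) (hba : b * a = 1) (hab : a * b = 1) : IsSelfAdjoint b :=
  letI : Invertible a := ⟨b, hba, hab⟩
  (IsSelfAdjoint.invOf_iff a).2 ha

theorem Function.Semiconj.one_sub_two_smul {R E : Type*} [CommRing R] [AddCommGroup E]
    [Module R E] {V : E →+ E} {ρ : E →ₗ[R] E} (h : Semiconj ρ V V) :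
    Semiconj ⇑(1 - (2 : R) • ρ) V V := by
  intro x
  simp [two_smul, h.eq]

section Antisymmetric

variable {H : Type*} [NormedAddCommGroup H] [InnerProductSpace ℂ H] [CompleteSpace H]
  {κ : H →+ H}

theorem adjoint_apply_eq_neg_of_antisymm (hκ : Involutive κ) {A : H →L[ℂ] H}
    (hA : ∀ f, κ (adjoint A (κ f)) = -(A f)) (f : H) : adjoint A (κ f) = -κ (A f) := by
  rw [← map_neg, ← hA f, hκ]

theorem antisymm_comp_of_isSelfAdjoint (hκ : Involutive κ) {A B : H →L[ℂ] H}
    (hA : ∀ f, κ (adjoint A (κ f)) = -(A f)) (hB : IsSelfAdjoint B)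
    (hcomm : Semiconj B (κ ∘ A) (κ ∘ A)) (f : H) :
    κ (adjoint (A ∘L B) (κ f)) = -((A ∘L B) f) := by
  calc κ (adjoint (A ∘L B) (κ f)) = κ (B (adjoint A (κ f))) := by
        rw [adjoint_comp, hB.adjoint_eq]; rfl
    _ = -κ (B ((κ ∘ A) f)) := by
        rw [adjoint_apply_eq_neg_of_antisymm hκ hA, map_neg, map_neg]; rfl
    _ = -κ (κ (A (B f))) := by rw [hcomm.eq]; rfl
    _ = -((A ∘L B) f) := by rw [hκ]; rfl

end Antisymmetric

theorem modified_covariance_antisymmetric_general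
    {H : Type*} [NormedAddCommGroup H] [InnerProductSpace ℂ H] [CompleteSpace H]
    -- the antiunitary involution `κ`
    (κ : H → H)
    (hκadd : ∀ x y : H, κ (x + y) = κ x + κ y)
    (hκinv : ∀ x : H, κ (κ x) = x)
    -- the unitary, `κ`-antisymmetric operator `U`
    (U : H →L[ℂ] H)
    (hanti : ∀ f : H, κ (ContinuousLinearMap.adjoint U (κ f)) = -(U f))
    -- the one-particle density `ρ`, selfadjoint and commuting with `κ ∘ U`
    (ρ : H →L[ℂ] H) (hρ : IsSelfAdjoint ρ)
    (hcomm : ∀ x : H, ρ (κ (U x)) = κ (U (ρ x)))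
    -- the bounded inverse `T` of `1 − 2ρ`
    (T : H →L[ℂ] H)
    (hT1 : T ∘L ((1 : H →L[ℂ] H) - (2 : ℂ) • ρ) = 1)
    (hT2 : ((1 : H →L[ℂ] H) - (2 : ℂ) • ρ) ∘L T = 1)
    (f : H) :
    κ (ContinuousLinearMap.adjoint (U ∘L T) (κ f)) = -((U ∘L T) f) := by
  set K : H →+ H := AddMonoidHom.mk' κ hκadd
  set S : H →L[ℂ] H := 1 - (2 : ℂ) • ρ
  have hS : IsSelfAdjoint S :=
    (IsSelfAdjoint.one _).sub ((IsSelfAdjoint.all (2 : ℝ)).smul hρ)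
  have hSV : Semiconj S (K ∘ U) (K ∘ U) :=
    Semiconj.one_sub_two_smul (V := K.comp U.toLinearMap.toAddMonoidHom)
      (ρ := ρ.toLinearMap) hcomm
  have hTV : Semiconj T (K ∘ U) (K ∘ U) :=
    hSV.inverse_left (fun x => congr($hT1 x)) (fun x => congr($hT2 x))
  exact antisymm_comp_of_isSelfAdjoint (κ := K) hκinv hanti (hS.of_mul_eq_one hT1 hT2) hTV f

/-- Let `H` be a complex Hilbert space, `κ` an antiunitary involution on
`H`, and `U` a unitary operator on `H` that is `κ`-antisymmetric.  Let `ρ` be a bounded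
selfadjoint operator on `H` commuting with `κ ∘ U`, and suppose `1 − 2ρ` is invertible
with bounded inverse `T`.  Then `Ũ := U ∘ T` is again `κ`-antisymmetric:
`κ (Ũ* (κ f)) = −Ũ f` for all `f ∈ H`. -/
theorem modified_covariance_antisymmetric
    {H : Type*} [NormedAddCommGroup H] [InnerProductSpace ℂ H] [CompleteSpace H]
    -- the antiunitary involution `κ`
    (κ : H → H)
    (hκadd : ∀ x y : H, κ (x + y) = κ x + κ y)
    (hκsmul : ∀ (c : ℂ) (x : H), κ (c • x) = (starRingEnd ℂ c) • κ x)
    (hκinv : ∀ x : H, κ (κ x) = x)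
    (hκinner : ∀ x y : H, (inner ℂ (κ x) (κ y) : ℂ) = (inner ℂ y x : ℂ))
    -- the unitary, `κ`-antisymmetric operator `U`
    (U : H →L[ℂ] H)
    (hU1 : ContinuousLinearMap.adjoint U ∘L U = 1)
    (hU2 : U ∘L ContinuousLinearMap.adjoint U = 1)
    (hanti : ∀ f : H, κ (ContinuousLinearMap.adjoint U (κ f)) = -(U f))
    -- the one-particle density `ρ`, selfadjoint and commuting with `κ ∘ U`
    (ρ : H →L[ℂ] H) (hρ : IsSelfAdjoint ρ)
    (hcomm : ∀ x : H, ρ (κ (U x)) = κ (U (ρ x)))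
    -- the bounded inverse `T` of `1 − 2ρ`
    (T : H →L[ℂ] H)
    (hT1 : T ∘L ((1 : H →L[ℂ] H) - (2 : ℂ) • ρ) = 1)
    (hT2 : ((1 : H →L[ℂ] H) - (2 : ℂ) • ρ) ∘L T = 1)
    (f : H) :
    κ (ContinuousLinearMap.adjoint (U ∘L T) (κ f)) = -((U ∘L T) f) :=
  modified_covariance_antisymmetric_general κ hκadd hκinv U hanti ρ hρ hcomm T hT1 hT2 f
end

section
/- Let H be a complex Hilbert space and ι a nonempty directed preorder. Let (A_i)_{i∈ι} be a net of bounded operators on H such that each A_i is positive, the net is increasing (for i ≤ j, the operator A_j − A_i is positive), and the net has a positive upper bound B (for all i, B − A_i is positive). Then the net has a least upper bound A among bounded operators: A − A_i is positive for all i, any bounded operator C with C − A_i positive for all i satisfies that C − A is positive, and moreover the net converges strongly to A, i.e. for every v ∈ H the net (A_i v)_{i∈ι} converges to A v in the norm of H (convergence along the atTop filter on ι). -/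
/-!
For `S ≤ T` in the Loewner order, `D = T - S` is positive, so `D * D ≤ ‖D‖ • D` and hence
`‖T v - S v‖² ≤ ‖T - S‖ · (re ⟪T v, v⟫ - re ⟪S v, v⟫)`. Beyond a fixed index `i₀` the norms
`‖A j - A i‖` are bounded by `‖B - A i₀‖`, while the real net `re ⟪A i v, v⟫` increases to its
supremum; so every `A i v` is Cauchy. The limit is a bounded operator because the `A i` are
eventually uniformly bounded, and it is the least upper bound because pointwise limits of positive
operators are positive.
-/

open scoped Topology
open Filter

theorem Metric.cauchySeq_of_exists_forall_ge_dist_lt {α ι : Type*} [PseudoMetricSpace α]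
    [Preorder ι] [Nonempty ι] [IsDirected ι (· ≤ ·)] {u : ι → α}
    (h : ∀ ε > 0, ∃ N, ∀ n ≥ N, dist (u n) (u N) < ε) : CauchySeq u := by
  refine Metric.cauchy_iff.2 ⟨map_neBot, fun ε hε => ?_⟩
  obtain ⟨N, hN⟩ := h (ε / 2) (half_pos hε)
  refine ⟨u '' Set.Ici N, image_mem_map (Ici_mem_atTop N), ?_⟩
  rintro _ ⟨m, hm, rfl⟩ _ ⟨n, hn, rfl⟩
  calc dist (u m) (u n) ≤ dist (u m) (u N) + dist (u n) (u N) := dist_triangle_right _ _ _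
    _ < ε / 2 + ε / 2 := add_lt_add (hN m hm) (hN n hn)
    _ = ε := add_halves ε

namespace ContinuousLinearMap

section Limit

variable {𝕜 E F ι : Type*} [NontriviallyNormedField 𝕜] [NormedAddCommGroup E] [NormedSpace 𝕜 E]
  [NormedAddCommGroup F] [NormedSpace 𝕜 F] {l : Filter ι} [l.NeBot]

theorem exists_tendsto_apply_of_eventually_norm_le (A : ι → E →L[𝕜] F)
    (hA : ∀ v, ∃ w, Tendsto (A · v) l (𝓝 w)) {C : ℝ} (hC : ∀ᶠ i in l, ‖A i‖ ≤ C) :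
    ∃ T : E →L[𝕜] F, ∀ v, Tendsto (A · v) l (𝓝 (T v)) := by
  choose f hf using hA
  let L : E →ₗ[𝕜] F := linearMapOfTendsto f (fun i => (A i : E →ₗ[𝕜] F)) (tendsto_pi_nhds.2 hf)
  refine ⟨L.mkContinuous C fun v => ?_, hf⟩
  exact le_of_tendsto (hf v).norm (hC.mono fun i hi => (A i).le_of_opNorm_le hi v)

end Limit

section Order

variable {𝕜 E ι : Type*} [RCLike 𝕜] [NormedAddCommGroup E] [InnerProductSpace 𝕜 E]
  {l : Filter ι} [l.NeBot]

@[simp]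
theorem reApplyInnerSelf_sub (S T : E →L[𝕜] E) (v : E) :
    (T - S).reApplyInnerSelf v = T.reApplyInnerSelf v - S.reApplyInnerSelf v := by
  simp [reApplyInnerSelf_apply, inner_sub_left]

theorem reApplyInnerSelf_le_of_le {S T : E →L[𝕜] E} (h : S ≤ T) (v : E) :
    S.reApplyInnerSelf v ≤ T.reApplyInnerSelf v :=
  sub_nonneg.1 <| reApplyInnerSelf_sub S T v ▸ h.2 v

theorem isPositive_of_tendsto_apply {F : ι → E →L[𝕜] E} {T : E →L[𝕜] E}
    (hFT : ∀ v, Tendsto (F · v) l (𝓝 (T v))) (hF : ∀ᶠ i in l, (F i).IsPositive) :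
    T.IsPositive := by
  refine ⟨fun x y => tendsto_nhds_unique ((hFT x).inner tendsto_const_nhds) ?_, fun x => ?_⟩
  · exact (tendsto_const_nhds.inner (hFT y)).congr' (hF.mono fun i hi => (hi.isSymmetric x y).symm)
  · exact ge_of_tendsto ((RCLike.continuous_re.tendsto _).comp ((hFT x).inner tendsto_const_nhds))
      (hF.mono fun i hi => hi.2 x)

theorem le_of_tendsto_apply_of_tendsto_apply {F G : ι → E →L[𝕜] E}
    {S T : E →L[𝕜] E} (hF : ∀ v, Tendsto (F · v) l (𝓝 (S v)))
    (hG : ∀ v, Tendsto (G · v) l (𝓝 (T v))) (h : ∀ᶠ i in l, F i ≤ G i) : S ≤ T :=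
  isPositive_of_tendsto_apply (fun v => (hG v).sub (hF v)) h

end Order

section CStar

variable {H : Type*} [NormedAddCommGroup H] [InnerProductSpace ℂ H] [CompleteSpace H]

theorem norm_apply_sq_le_norm_mul_reApplyInnerSelf {D : H →L[ℂ] H} (hD : 0 ≤ D) (v : H) :
    ‖D v‖ ^ 2 ≤ ‖D‖ * D.reApplyInnerSelf v := by
  have hsq : D * D ≤ ‖D‖ • D := by
    -- `D * D = √D * D * √D ≤ ‖D‖ • (√D * √D)`
    obtain ⟨s, hs, rfl⟩ : ∃ s, IsSelfAdjoint s ∧ s * s = D :=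
      ⟨CFC.sqrt D, (CFC.sqrt_nonneg D).isSelfAdjoint, CFC.sqrt_mul_sqrt_self D hD⟩
    simpa [hs.star_eq, mul_assoc] using
      CStarAlgebra.star_left_conjugate_le_norm_smul (a := s) (b := s * s) hD.isSelfAdjoint
  calc ‖D v‖ ^ 2 = (D * D).reApplyInnerSelf v := by
        rw [reApplyInnerSelf_apply, mul_apply_eq_comp,
          ((nonneg_iff_isPositive D).1 hD).inner_left_eq_inner_right, inner_self_eq_norm_sq]
    _ ≤ (‖D‖ • D).reApplyInnerSelf v := reApplyInnerSelf_le_of_le hsq v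
    _ = ‖D‖ * D.reApplyInnerSelf v := by
        rw [reApplyInnerSelf_apply, reApplyInnerSelf_apply, smul_apply, ← Complex.coe_smul,
          inner_smul_left, Complex.conj_ofReal]
        exact Complex.re_ofReal_mul _ _

theorem norm_sub_le_norm_sub_of_le {R S T B : H →L[ℂ] H} (hRS : R ≤ S) (hST : S ≤ T)
    (hTB : T ≤ B) : ‖T - S‖ ≤ ‖B - R‖ :=
  CStarAlgebra.norm_le_norm_of_nonneg_of_le (sub_nonneg.2 hST) (sub_le_sub hTB hRS)

variable {ι : Type*} [Preorder ι] [Nonempty ι] [IsDirected ι (· ≤ ·)]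

theorem cauchySeq_apply_of_monotone_of_le {A : ι → H →L[ℂ] H} {B : H →L[ℂ] H}
    (hA : Monotone A) (hAB : ∀ i, A i ≤ B) (v : H) : CauchySeq (A · v) := by
  obtain ⟨i₀⟩ := ‹Nonempty ι›
  set r : ι → ℝ := fun i => (A i).reApplyInnerSelf v
  have hbdd : BddAbove (Set.range r) :=
    ⟨B.reApplyInnerSelf v, Set.forall_mem_range.2 fun i => reApplyInnerSelf_le_of_le (hAB i) v⟩
  set K := ‖B - A i₀‖ + 1
  have hK : 0 < K := by positivity
  refine Metric.cauchySeq_of_exists_forall_ge_dist_lt fun ε hε => ?_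
  obtain ⟨N₀, hN₀⟩ := exists_lt_of_lt_ciSup (sub_lt_self (⨆ i, r i) (by positivity : 0 < ε ^ 2 / K))
  obtain ⟨N, hN₀N, hi₀N⟩ := exists_ge_ge N₀ i₀
  refine ⟨N, fun n hn => lt_of_pow_lt_pow_left₀ 2 hε.le ?_⟩
  have hrN : 0 ≤ r n - r N := sub_nonneg.2 (reApplyInnerSelf_le_of_le (hA hn) v)
  calc dist (A n v) (A N v) ^ 2 = ‖(A n - A N) v‖ ^ 2 := by rw [dist_eq_norm, sub_apply]
    _ ≤ ‖A n - A N‖ * (r n - r N) := by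
        simpa [r] using norm_apply_sq_le_norm_mul_reApplyInnerSelf (sub_nonneg.2 (hA hn)) v
    _ ≤ K * ((⨆ i, r i) - r N₀) := by
        refine mul_le_mul ?_ ?_ hrN hK.le
        · exact (norm_sub_le_norm_sub_of_le (hA hi₀N) (hA hn) (hAB n)).trans
            (le_add_of_nonneg_right zero_le_one)
        · linarith [le_ciSup hbdd n, reApplyInnerSelf_le_of_le (hA hN₀N) v]
    _ < K * (ε ^ 2 / K) := by gcongr; linarith
    _ = ε ^ 2 := mul_div_cancel₀ _ hK.ne'

end CStar

end ContinuousLinearMap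

open ContinuousLinearMap

theorem increasing_net_of_positive_operators_strong_limit_general
    {H : Type*} [NormedAddCommGroup H] [InnerProductSpace ℂ H] [CompleteSpace H]
    {ι : Type*} [Preorder ι] [Nonempty ι] [IsDirected ι (· ≤ ·)]
    (A : ι → H →L[ℂ] H)
    (hmono : ∀ i j, i ≤ j → (A j - A i).IsPositive)
    (B : H →L[ℂ] H)
    (hB : ∀ i, (B - A i).IsPositive) :
    ∃ T : H →L[ℂ] H,
      (∀ i, (T - A i).IsPositive) ∧
      (∀ C : H →L[ℂ] H, (∀ i, (C - A i).IsPositive) → (C - T).IsPositive) ∧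
      ∀ v : H, Filter.Tendsto (fun i => A i v) Filter.atTop (nhds (T v)) := by
  have hA : Monotone A := hmono
  obtain ⟨i₀⟩ := ‹Nonempty ι›
  have hbdd : ∀ᶠ i in atTop, ‖A i‖ ≤ ‖A i₀‖ + ‖B - A i₀‖ :=
    eventually_atTop.2 ⟨i₀, fun i hi => (norm_le_norm_add_norm_sub' _ _).trans
      (add_le_add le_rfl (norm_sub_le_norm_sub_of_le le_rfl (hA hi) (hB i)))⟩
  obtain ⟨T, hT⟩ := exists_tendsto_apply_of_eventually_norm_le A
    (fun v => cauchySeq_tendsto_of_complete (cauchySeq_apply_of_monotone_of_le hA hB v)) hbdd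
  refine ⟨T, fun i => ?_, fun C hC => ?_, hT⟩
  · exact le_of_tendsto_apply_of_tendsto_apply (fun _ => tendsto_const_nhds) hT
      (eventually_atTop.2 ⟨i, fun _ => (hA ·)⟩)
  · exact le_of_tendsto_apply_of_tendsto_apply hT (fun _ => tendsto_const_nhds)
      (Eventually.of_forall hC)

/-- Let `H` be a complex Hilbert space and `ι` a nonempty directed
preorder.  Let `(A i)_{i ∈ ι}` be an increasing net of positive bounded operators on `H`
with a positive upper bound `B`.  Then the net has a least upper bound `T` among bounded
operators, and the net converges strongly to `T`. -/
theorem increasing_net_of_positive_operators_strong_limit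
    {H : Type*} [NormedAddCommGroup H] [InnerProductSpace ℂ H] [CompleteSpace H]
    {ι : Type*} [Preorder ι] [Nonempty ι] [IsDirected ι (· ≤ ·)]
    (A : ι → H →L[ℂ] H)
    (hpos : ∀ i, (A i).IsPositive)
    (hmono : ∀ i j, i ≤ j → (A j - A i).IsPositive)
    (B : H →L[ℂ] H) (hBpos : B.IsPositive)
    (hB : ∀ i, (B - A i).IsPositive) :
    ∃ T : H →L[ℂ] H,
      (∀ i, (T - A i).IsPositive) ∧
      (∀ C : H →L[ℂ] H, (∀ i, (C - A i).IsPositive) → (C - T).IsPositive) ∧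
      ∀ v : H, Filter.Tendsto (fun i => A i v) Filter.atTop (nhds (T v)) :=
  increasing_net_of_positive_operators_strong_limit_general A hmono B hB
end
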